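/- Let A be an N×N complex matrix, z ∈ ℂ an eigenvalue of A, and η > 0. Let s_1 ≥ … ≥ s_N denote the singular values of A − z·I. If s_{N−1} < η, then η²·tr((A − z)*(A − z) + η²·I)^{−1} > 3/2; equivalently, with f_η(z) = η²·tr((A − z)*(A − z) + η²·I)^{−1} − 1, one has f_η(z) > 1/2. -/

import Mathlib

open MeasureTheory ProbabilityTheory Matrix Finset
open scoped BigOperators ENNReal NNReal Classical

noncomputable section

instance matrixMS {m n α : Type*} [MeasurableSpace α] : MeasurableSpace (Matrix m n α) :=
  inferInstanceAs (MeasurableSpace (m → n → α))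

/-- The singular values of a complex square matrix, in ascending order
(index `0` is the smallest singular value, i.e. `s_N` in the paper's convention). -/
def svalAsc {N : ℕ} (M : Matrix (Fin N) (Fin N) ℂ) : Fin N → ℝ :=
  (fun i => Real.sqrt ((Matrix.isHermitian_conjTranspose_mul_self M).eigenvalues i)) ∘
    Tuple.sort (fun i => Real.sqrt ((Matrix.isHermitian_conjTranspose_mul_self M).eigenvalues i))

/-- A (complex) non-Hermitian Wigner matrix: independent entries (with real and imaginary
parts independent), mean zero, variance `1/N`, and all moments bounded by constants `C p`
independent of `N`. -/
def IsWignerC {Ω : Type*} [MeasurableSpace Ω] (μ : Measure Ω) {N : ℕ}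
    (A : Ω → Matrix (Fin N) (Fin N) ℂ) (C : ℕ → ℝ) : Prop :=
  (∀ j k, Measurable fun ω => A ω j k) ∧
  iIndepFun
    (fun (p : (Fin N × Fin N) × Bool) ω =>
      if p.2 then (A ω p.1.1 p.1.2).re else (A ω p.1.1 p.1.2).im) μ ∧
  (∀ j k, ∫ ω, A ω j k ∂μ = 0) ∧
  (∀ j k, ∫ ω, (N : ℝ) * ‖A ω j k‖ ^ 2 ∂μ = 1) ∧
  (∀ p q : ℕ, 2 < p → q ≤ p → ∀ j k,
    ∫ ω, (N : ℝ) ^ ((p : ℝ) / 2) * (A ω j k).re ^ (p - q) * (A ω j k).im ^ q ∂μ ≤ C p)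

/-- A real non-Hermitian Wigner matrix: independent real entries, mean zero, variance `1/N`,
and all moments bounded by constants `C p` independent of `N`. -/
def IsWignerR {Ω : Type*} [MeasurableSpace Ω] (μ : Measure Ω) {N : ℕ}
    (A : Ω → Matrix (Fin N) (Fin N) ℝ) (C : ℕ → ℝ) : Prop :=
  (∀ j k, Measurable fun ω => A ω j k) ∧
  iIndepFun
    (fun (p : Fin N × Fin N) ω => A ω p.1 p.2) μ ∧
  (∀ j k, ∫ ω, A ω j k ∂μ = 0) ∧
  (∀ j k, ∫ ω, (N : ℝ) * (A ω j k) ^ 2 ∂μ = 1) ∧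
  (∀ p : ℕ, 2 < p → ∀ j k,
    ∫ ω, (N : ℝ) ^ ((p : ℝ) / 2) * (A ω j k) ^ p ∂μ ≤ C p)

/-- Two (complex) random matrices are `t`-matching: entrywise mixed moments agree to third
order and differ by at most `t/N²` at fourth order. -/
def TMatchingC {ΩA ΩB : Type*} [MeasurableSpace ΩA] [MeasurableSpace ΩB]
    (μA : Measure ΩA) (μB : Measure ΩB) {N : ℕ}
    (A : ΩA → Matrix (Fin N) (Fin N) ℂ) (B : ΩB → Matrix (Fin N) (Fin N) ℂ) (t : ℝ) : Prop :=
  (∀ p q : ℕ, 1 ≤ p → p ≤ 3 → q ≤ p → ∀ j k,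
    ∫ ω, (A ω j k).re ^ (p - q) * (A ω j k).im ^ q ∂μA =
      ∫ ω, (B ω j k).re ^ (p - q) * (B ω j k).im ^ q ∂μB) ∧
  (∀ q : ℕ, q ≤ 4 → ∀ j k,
    |(∫ ω, (A ω j k).re ^ (4 - q) * (A ω j k).im ^ q ∂μA) -
      ∫ ω, (B ω j k).re ^ (4 - q) * (B ω j k).im ^ q ∂μB| ≤ t / (N : ℝ) ^ 2)

/-- Two real random matrices are `t`-matching: entrywise moments agree to third order and
differ by at most `t/N²` at fourth order. -/
def TMatchingR {ΩA ΩB : Type*} [MeasurableSpace ΩA] [MeasurableSpace ΩB]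
    (μA : Measure ΩA) (μB : Measure ΩB) {N : ℕ}
    (A : ΩA → Matrix (Fin N) (Fin N) ℝ) (B : ΩB → Matrix (Fin N) (Fin N) ℝ) (t : ℝ) : Prop :=
  (∀ p : ℕ, 1 ≤ p → p ≤ 3 → ∀ j k,
    ∫ ω, (A ω j k) ^ p ∂μA = ∫ ω, (B ω j k) ^ p ∂μB) ∧
  (∀ j k,
    |(∫ ω, (A ω j k) ^ 4 ∂μA) - ∫ ω, (B ω j k) ^ 4 ∂μB| ≤ t / (N : ℝ) ^ 2)

/-- The real Ginibre ensemble `GinOE(N)`: i.i.d. real centered Gaussian entries of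
variance `1/N`. -/
def GinOE (N : ℕ) : Measure (Matrix (Fin N) (Fin N) ℝ) :=
  (Measure.pi fun _ : Fin N × Fin N => gaussianReal 0 (N : ℝ≥0)⁻¹).map
    (fun g => Matrix.of fun i j => g (i, j))

/-- The complex Ginibre ensemble `GinUE(N)`: i.i.d. entries with independent real and
imaginary parts, centered Gaussians of variance `1/(2N)`. -/
def GinUE (N : ℕ) : Measure (Matrix (Fin N) (Fin N) ℂ) :=
  (Measure.pi fun _ : Fin N × Fin N =>
      (gaussianReal 0 (2 * N : ℝ≥0)⁻¹).prod (gaussianReal 0 (2 * N : ℝ≥0)⁻¹)).map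
    (fun g => Matrix.of fun i j => ((g (i, j)).1 + (g (i, j)).2 * Complex.I))

/-- The standard complex Gaussian vector measure on `ℂ^N`: i.i.d. components with
independent real and imaginary parts, centered Gaussians of variance `1/2`. -/
def stdCGaussian (N : ℕ) : Measure (Fin N → ℂ) :=
  (Measure.pi fun _ : Fin N =>
      (gaussianReal 0 (2 : ℝ≥0)⁻¹).prod (gaussianReal 0 (2 : ℝ≥0)⁻¹)).map
    (fun g i => (g i).1 + (g i).2 * Complex.I)

/-- The standard real Gaussian vector measure on `ℝ^N`: i.i.d. standard Gaussian components. -/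
def stdRGaussian (N : ℕ) : Measure (Fin N → ℝ) :=
  Measure.pi fun _ : Fin N => gaussianReal 0 1

open scoped ComplexOrder in
theorem eig_nonneg_aux {N : ℕ} (M : Matrix (Fin N) (Fin N) ℂ) (i : Fin N) :
    0 ≤ (Matrix.isHermitian_conjTranspose_mul_self M).eigenvalues i :=
  (Matrix.posSemidef_conjTranspose_mul_self M).eigenvalues_nonneg i

open scoped ComplexOrder in
theorem trace_inv_eq_sum {N : ℕ} (M : Matrix (Fin N) (Fin N) ℂ) (η : ℝ) (hη : 0 < η) :
    ((Mᴴ * M + ((η : ℂ) ^ 2) • 1)⁻¹).trace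
      = ∑ i, ((((isHermitian_conjTranspose_mul_self M).eigenvalues i : ℂ) + (η:ℂ)^2))⁻¹ := by
  set hH := isHermitian_conjTranspose_mul_self M
  set U : Matrix (Fin N) (Fin N) ℂ := (hH.eigenvectorUnitary : Matrix (Fin N) (Fin N) ℂ)
  have hUU : Uᴴ * U = 1 := by
    simpa [U, star_eq_conjTranspose] using (Matrix.mem_unitaryGroup_iff').mp hH.eigenvectorUnitary.2
  have hUU' : U * Uᴴ = 1 := by
    simpa [U, star_eq_conjTranspose] using (Matrix.mem_unitaryGroup_iff).mp hH.eigenvectorUnitary.2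
  set v : Fin N → ℂ := fun i => (hH.eigenvalues i : ℂ) + (η:ℂ)^2 with hv
  have hdecomp : Mᴴ * M + ((η : ℂ) ^ 2) • 1 = U * diagonal v * Uᴴ := by
    have h1 : Mᴴ * M = U * diagonal (RCLike.ofReal ∘ hH.eigenvalues) * Uᴴ := by
      simpa [U, star_eq_conjTranspose] using hH.spectral_theorem
    have h2 : diagonal v = diagonal (RCLike.ofReal ∘ hH.eigenvalues) + ((η:ℂ)^2) • 1 := by
      funext i j
      rcases eq_or_ne i j with h | h
      · subst h
        simp [diagonal_apply_eq, Matrix.add_apply, Matrix.smul_apply, Matrix.one_apply_eq, hv]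
      · simp [diagonal_apply_ne _ h, Matrix.add_apply, Matrix.smul_apply, Matrix.one_apply_ne h]
    have h3 : ((η:ℂ)^2) • (1 : Matrix (Fin N) (Fin N) ℂ) = U * (((η:ℂ)^2) • 1) * Uᴴ := by
      rw [mul_smul_comm, smul_mul_assoc, mul_one, hUU']
    rw [h1, h2, mul_add, add_mul, ← h3]
  have hvne : ∀ i, v i ≠ 0 := by
    intro i
    have h0 : (0:ℝ) < hH.eigenvalues i + η^2 := by
      have := (posSemidef_conjTranspose_mul_self M).eigenvalues_nonneg i
      positivity
    have heq : v i = ((hH.eigenvalues i + η^2 : ℝ) : ℂ) := by push_cast [hv]; ring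
    rw [heq]
    exact Complex.ofReal_ne_zero.mpr h0.ne'
  have hinv : (U * diagonal v * Uᴴ)⁻¹ = U * diagonal v⁻¹ * Uᴴ := by
    apply inv_eq_right_inv
    have hdd : diagonal v * diagonal v⁻¹ = 1 := by
      rw [diagonal_mul_diagonal]
      rw [show (fun i => v i * v⁻¹ i) = fun _ => (1:ℂ) from funext fun i => mul_inv_cancel₀ (hvne i),
        diagonal_one]
    calc U * diagonal v * Uᴴ * (U * diagonal v⁻¹ * Uᴴ)
        = U * diagonal v * (Uᴴ * U) * diagonal v⁻¹ * Uᴴ := by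
          simp only [mul_assoc]
      _ = U * (diagonal v * diagonal v⁻¹) * Uᴴ := by rw [hUU]; simp only [mul_one, mul_assoc]
      _ = 1 := by rw [hdd, mul_one, hUU']
  rw [hdecomp, hinv]
  rw [trace_mul_comm, ← mul_assoc, hUU, one_mul, trace_diagonal]
  rfl

/-- if `z` is an eigenvalue of `A` and the second smallest singular value of
`A - z·I` is `< η`, then `η² · tr((A-z)ᴴ(A-z) + η²·I)⁻¹ > 3/2`. -/
theorem stmt_17 {N : ℕ} (hN : 2 ≤ N) (A : Matrix (Fin N) (Fin N) ℂ) (z : ℂ)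
    (hz : (A - z • (1 : Matrix (Fin N) (Fin N) ℂ)).det = 0)
    (η : ℝ) (hη : 0 < η)
    (hs : svalAsc (A - z • 1) ⟨1, by omega⟩ < η) :
    (3 : ℝ) / 2 <
      η ^ 2 * ((((A - z • 1)ᴴ * (A - z • 1) + ((η : ℂ) ^ 2) • 1)⁻¹).trace).re := by
  set M := A - z • (1 : Matrix (Fin N) (Fin N) ℂ) with hM
  set hH := Matrix.isHermitian_conjTranspose_mul_self M with hhH
  set lam := hH.eigenvalues with hlam
  have hnn : ∀ i, 0 ≤ lam i := fun i => eig_nonneg_aux M i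
  have hre : (((Mᴴ * M + ((η : ℂ) ^ 2) • 1)⁻¹).trace).re = ∑ i, (lam i + η ^ 2)⁻¹ := by
    rw [trace_inv_eq_sum M η hη, Complex.re_sum]
    refine Finset.sum_congr rfl fun i _ => ?_
    have : ((lam i : ℂ) + (η : ℂ) ^ 2)⁻¹ = (((lam i + η ^ 2)⁻¹ : ℝ) : ℂ) := by
      push_cast; ring
    rw [this, Complex.ofReal_re]
  set f : Fin N → ℝ := fun i => Real.sqrt (lam i) with hf
  set σ := Tuple.sort f with hσ
  set i0 : Fin N := σ ⟨0, by omega⟩ with hi0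
  set i1 : Fin N := σ ⟨1, by omega⟩ with hi1
  have hs1 : f i1 < η := hs
  have hne : i0 ≠ i1 := fun h => by
    have := σ.injective h
    simp [Fin.ext_iff] at this
  -- some eigenvalue vanishes
  have hprod : ∏ i, lam i = 0 := by
    have hdet : (Mᴴ * M).det = 0 := by
      rw [Matrix.det_mul, hz, mul_zero]
    have := hH.det_eq_prod_eigenvalues
    rw [hdet] at this
    have : ((∏ i, lam i : ℝ) : ℂ) = 0 := by
      rw [Complex.ofReal_prod]; exact this.symm
    exact_mod_cast this
  obtain ⟨j, _, hj⟩ := Finset.prod_eq_zero_iff.mp hprod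
  have h0 : lam i0 = 0 := by
    have hmono := Tuple.monotone_sort f
    have h01 : f i0 ≤ f j := by
      have hle : (⟨0, by omega⟩ : Fin N) ≤ σ.symm j := by simp [Fin.le_def]
      have := hmono (a := ⟨0, by omega⟩) (b := σ.symm j) hle
      simpa [hi0, Function.comp, ← hσ] using this
    rw [hf] at h01
    simp only [hj, Real.sqrt_zero] at h01
    have hge := Real.sqrt_nonneg (lam i0)
    have : Real.sqrt (lam i0) = 0 := le_antisymm h01 hge
    have := congrArg (fun x => x ^ 2) this
    simpa [Real.sq_sqrt (hnn i0)] using this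
  have h1 : lam i1 < η ^ 2 := by
    have : Real.sqrt (lam i1) < η := hs1
    calc lam i1 = Real.sqrt (lam i1) ^ 2 := (Real.sq_sqrt (hnn i1)).symm
      _ < η ^ 2 := by
          exact pow_lt_pow_left₀ this (Real.sqrt_nonneg _) two_ne_zero
  -- sum bound
  have hpos : ∀ i, (0:ℝ) < lam i + η ^ 2 := fun i => by have := hnn i; positivity
  have hsum : (lam i0 + η ^ 2)⁻¹ + (lam i1 + η ^ 2)⁻¹ ≤ ∑ i, (lam i + η ^ 2)⁻¹ := by
    rw [← Finset.sum_pair (f := fun i => (lam i + η ^ 2)⁻¹) hne]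
    refine Finset.sum_le_sum_of_subset_of_nonneg (Finset.subset_univ _) fun i _ _ => ?_
    exact (inv_pos.mpr (hpos i)).le
  have key : (3:ℝ) / 2 < η ^ 2 * ((lam i0 + η ^ 2)⁻¹ + (lam i1 + η ^ 2)⁻¹) := by
    rw [h0, zero_add]
    have hu : (lam i1 + η ^ 2) * (lam i1 + η ^ 2)⁻¹ = 1 := mul_inv_cancel₀ (hpos i1).ne'
    have he : η ^ 2 * (η ^ 2)⁻¹ = 1 := mul_inv_cancel₀ (by positivity)
    nlinarith [mul_pos (sub_pos.mpr h1) (inv_pos.mpr (hpos i1))]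
  calc (3:ℝ) / 2 < η ^ 2 * ((lam i0 + η ^ 2)⁻¹ + (lam i1 + η ^ 2)⁻¹) := key
    _ ≤ η ^ 2 * ∑ i, (lam i + η ^ 2)⁻¹ := by
        exact mul_le_mul_of_nonneg_left hsum (sq_nonneg η)
    _ = η ^ 2 * (((Mᴴ * M + ((η : ℂ) ^ 2) • 1)⁻¹).trace).re := by rw [hre]
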